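/- arXiv:2512.03188 — 7 statements merged into one kernel-verified Lean document; each statement's English description precedes it below -/
import Mathlib

section
/- If a, b, c are positive integers with a < b, a!·b! = c!, and k = c - b, then a < k + 2·⌈log₂ c⌉. -/
lemma digitsum_lt : ∀ n : ℕ, n ≠ 0 → (Nat.digits 2 n).sum ≤ Nat.log 2 n + 1 := by
  intro n hn
  have hlen : (Nat.digits 2 n).length = Nat.log 2 n + 1 := Nat.digits_len 2 n one_lt_two hn
  calc (Nat.digits 2 n).sum ≤ (Nat.digits 2 n).length * 1 := by
        apply List.sum_le_card_nsmul
        intro x hx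
        exact Nat.lt_succ_iff.mp (Nat.digits_lt_base one_lt_two hx)
    _ = Nat.log 2 n + 1 := by rw [hlen, mul_one]

lemma digitsum_le_clog {n c : ℕ} (hn : n ≠ 0) (hnc : n < c) :
    (Nat.digits 2 n).sum ≤ Nat.clog 2 c := by
  have h1 : (Nat.digits 2 n).sum ≤ Nat.log 2 n + 1 := digitsum_lt n hn
  have h2 : Nat.log 2 n < Nat.clog 2 c := by
    have ha : 2 ^ Nat.log 2 n ≤ n := Nat.pow_log_le_self 2 hn
    have hb : c ≤ 2 ^ Nat.clog 2 c := Nat.le_pow_clog one_lt_two c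
    have : (2:ℕ) ^ Nat.log 2 n < 2 ^ Nat.clog 2 c := lt_of_le_of_lt ha (lt_of_lt_of_le hnc hb)
    exact (Nat.pow_lt_pow_iff_right one_lt_two).mp this
  omega

lemma digitsum_pos {n : ℕ} (hn : n ≠ 0) : 0 < (Nat.digits 2 n).sum := by
  have hne : Nat.digits 2 n ≠ [] := Nat.digits_ne_nil_iff_ne_zero.mpr hn
  have hlast := Nat.getLast_digit_ne_zero 2 hn
  have hmem := List.getLast_mem hne
  have := List.single_le_sum (fun x _ => Nat.zero_le x) _ hmem
  omega

lemma legendre2 (n : ℕ) : padicValNat 2 n.factorial = n - (Nat.digits 2 n).sum := by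
  have : Fact (Nat.Prime 2) := ⟨Nat.prime_two⟩
  have := sub_one_mul_padicValNat_factorial (p := 2) n
  simpa using this

theorem stmt4 (a b c k : ℕ) (ha : 1 ≤ a) (hb : 1 ≤ b) (hc : 1 ≤ c)
    (hab : a < b) (h : a.factorial * b.factorial = c.factorial)
    (hk : k = c - b) :
    (a : ℝ) < (k : ℝ) + 2 * ⌈Real.logb 2 c⌉ := by
  have : Fact (Nat.Prime 2) := ⟨Nat.prime_two⟩
  -- b ≤ c
  have hbc : b ≤ c := by
    by_contra hcb
    push_neg at hcb
    have : c.factorial < b.factorial := Nat.factorial_lt hc |>.mpr hcb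
    nlinarith [Nat.one_le_iff_ne_zero.mp (Nat.factorial_pos a),
      Nat.factorial_pos a, Nat.factorial_pos b, Nat.factorial_pos c,
      Nat.one_le_of_lt (Nat.one_lt_two) ]
  have hc2 : 2 ≤ c := lt_of_le_of_lt ha hab |>.trans_le hbc
  -- ceiling of logb equals Nat.clog
  have hceil : ⌈Real.logb 2 (c : ℝ)⌉ = (Nat.clog 2 c : ℤ) := by
    rw [show (2:ℝ) = ((2:ℕ):ℝ) by norm_num, Real.ceil_logb_natCast (Nat.cast_nonneg c)]
    exact_mod_cast Int.clog_natCast (R := ℝ) 2 c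
  set L := Nat.clog 2 c with hL
  have hLpos : 0 < L := Nat.clog_pos one_lt_two hc2
  -- reduce to an integer inequality
  have key : (a : ℤ) < (k : ℤ) + 2 * L := by
    rcases eq_or_lt_of_le hbc with rfl | hblt
    · -- b = c, so a! = 1, a = 1, k = 0
      have ha1 : a.factorial = 1 := by
        have := Nat.factorial_pos b
        nlinarith
      have : a ≤ 1 := by
        by_contra hgt
        push_neg at hgt
        have := Nat.factorial_lt (show 0 < 1 by norm_num) |>.mpr hgt
        simp [ha1] at this
      have hk0 : k = 0 := by omega
      have : a = 1 := le_antisymm this ha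
      subst this hk0
      push_cast
      omega
    · -- b < c
      have hval : padicValNat 2 (a.factorial * b.factorial) = padicValNat 2 c.factorial := by
        rw [h]
      rw [padicValNat.mul (Nat.factorial_ne_zero a) (Nat.factorial_ne_zero b),
        legendre2, legendre2, legendre2] at hval
      have hsa := Nat.digit_sum_le 2 a
      have hsb := Nat.digit_sum_le 2 b
      have hsc := Nat.digit_sum_le 2 c
      have hsaL : (Nat.digits 2 a).sum ≤ L := digitsum_le_clog (by omega) (by omega)
      have hsbL : (Nat.digits 2 b).sum ≤ L := digitsum_le_clog (by omega) hblt
      have hscpos : 0 < (Nat.digits 2 c).sum := digitsum_pos (by omega)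
      omega
  calc (a : ℝ) < ((k : ℤ) + 2 * L : ℤ) := by exact_mod_cast key
    _ = (k : ℝ) + 2 * ⌈Real.logb 2 c⌉ := by rw [hceil]; push_cast; ring
end

section
/- If a, b, c are positive integers with 2 ≤ a < b, a!·b! = c!, and k = c - b ≥ 1, then k < a. -/
theorem stmt5 (a b c k : ℕ) (ha : 2 ≤ a) (hab : a < b) (hc : 1 ≤ c)
    (h : a.factorial * b.factorial = c.factorial)
    (hk : k = c - b) (hk1 : 1 ≤ k) : k < a := by
  by_contra hcon
  push_neg at hcon
  have hbc : b < c := by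
    have h2 : b.factorial < c.factorial := by
      calc b.factorial < 2 * b.factorial := by
            have := b.factorial_pos; omega
        _ ≤ a.factorial * b.factorial :=
            Nat.mul_le_mul_right _ (Nat.le_trans ha a.self_le_factorial)
        _ = c.factorial := h
    exact (Nat.factorial_lt (by omega)).mp h2
  have hcbk : c = b + k := by omega
  have hfac : a.factorial = (b + 1).ascFactorial k := by
    have := Nat.factorial_mul_ascFactorial b k
    rw [← hcbk] at this
    rw [← h] at this
    have hb0 := b.factorial_pos
    exact (Nat.eq_of_mul_eq_mul_left hb0 (by linarith [this])).symm
  have h1 : (b + 1) ^ k ≤ a.factorial := hfac ▸ Nat.pow_succ_le_ascFactorial (b+1) k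
  have h2 : a.factorial ≤ a ^ a := a.factorial_le_pow
  have h3 : a ^ a < (a + 2) ^ a := Nat.pow_lt_pow_left (by omega) (by omega)
  have h4 : (a + 2) ^ a ≤ (b + 1) ^ k :=
    Nat.le_trans (Nat.pow_le_pow_left (by omega) a) (Nat.pow_le_pow_right (by omega) hcon)
  omega
end

section
/- There are no positive integers b, c with c = b + 2 and (p-1)!·b! = c!, whenever p is a prime congruent to 5 modulo 6. -/
theorem stmt7 (p : ℕ) (hp : p.Prime) (h5 : p % 6 = 5) :
    ¬ ∃ b c : ℕ, 0 < b ∧ 0 < c ∧ c = b + 2 ∧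
      (p - 1).factorial * b.factorial = c.factorial := by
  rintro ⟨b, c, hb, hc, rfl, heq⟩
  haveI : Fact p.Prime := ⟨hp⟩
  have hp5 : 5 ≤ p := by omega
  have hfac : (p - 1).factorial = (b + 1) * (b + 2) := by
    have h2 : (b + 2).factorial = ((b + 1) * (b + 2)) * b.factorial := by
      rw [Nat.factorial_succ, Nat.factorial_succ]; ring
    rw [h2] at heq
    exact Nat.mul_right_cancel b.factorial_pos heq
  set z : ZMod p := ((2 * b + 3 : ℕ) : ZMod p) with hz
  have hsq : z ^ 2 = -3 := by
    have hnat : (2 * b + 3) ^ 2 = 4 * (p - 1).factorial + 1 := by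
      rw [hfac]; ring
    have hcast := congrArg (fun n : ℕ => (n : ZMod p)) hnat
    push_cast at hcast
    rw [ZMod.wilsons_lemma] at hcast
    rw [hz]; push_cast
    linear_combination hcast
  have h2ne : (2 : ZMod p) ≠ 0 := by
    have := (ZMod.natCast_eq_zero_iff 2 p).not.mpr
      (by intro h; have := Nat.le_of_dvd (by norm_num) h; omega)
    simpa using this
  set ω : ZMod p := (z - 1) * (2 : ZMod p)⁻¹ with hω
  have h4 : (2 : ZMod p)⁻¹ * 2 = 1 := inv_mul_cancel₀ h2ne
  have h2ω : (2 : ZMod p) * ω = z - 1 := by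
    rw [hω, mul_comm, mul_assoc, h4, mul_one]
  have h4ne : (4 : ZMod p) ≠ 0 := by
    have := (ZMod.natCast_eq_zero_iff 4 p).not.mpr
      (by intro h; have := Nat.le_of_dvd (by norm_num) h; omega)
    simpa using this
  have h4eq : (4 : ZMod p) * (ω ^ 2 + ω + 1) = 0 := by
    linear_combination (2 * ω + z + 1) * h2ω + hsq
  have hωeq : ω ^ 2 + ω + 1 = 0 := by
    rcases mul_eq_zero.mp h4eq with h | h
    · exact absurd h h4ne
    · exact h
  have hωne : ω ≠ 0 := by
    intro h
    rw [h] at hωeq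
    simp at hωeq
  have hω3 : ω ^ 3 = 1 := by linear_combination (ω - 1) * hωeq
  have hωp : ω ^ (p - 1) = 1 := ZMod.pow_card_sub_one_eq_one hωne
  have hd3 : orderOf ω ∣ 3 := orderOf_dvd_of_pow_eq_one hω3
  have hdp : orderOf ω ∣ p - 1 := orderOf_dvd_of_pow_eq_one hωp
  have hgcd : Nat.Coprime 3 (p - 1) :=
    (Nat.prime_three.coprime_iff_not_dvd).mpr (by omega)
  have hord : orderOf ω = 1 := Nat.eq_one_of_dvd_one (hgcd ▸ Nat.dvd_gcd hd3 hdp)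
  have hω1 : ω = 1 := orderOf_eq_one_iff.mp hord
  rw [hω1] at hωeq
  norm_num at hωeq
  have h3 : ((3 : ℕ) : ZMod p) = 0 := by push_cast; linear_combination hωeq
  have := (ZMod.natCast_eq_zero_iff 3 p).mp h3
  have := Nat.le_of_dvd (by norm_num) this
  omega
end

section
/- There are no positive integers b, c with c = b + 4 and (p-1)!·b! = c!, whenever p is a prime congruent to 2 or 3 modulo 5. -/
/-!
By Wilson's theorem, `(p-1)! = (b+1)(b+2)(b+3)(b+4)` forces `x(x+1)(x+2)(x+3) = -1` in `ZMod p`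
for `x = b + 1`. Since `x(x+1)(x+2)(x+3) + 1 = (x² + 3x + 1)²`, this gives `x² + 3x + 1 = 0`,
hence `5 = (2x + 3)²` is a square mod `p`. By quadratic reciprocity that happens only when `p` is
a square mod `5`, which `2` and `3` are not.
-/

theorem isSquare_five_of_mul_consecutive_eq_neg_one {R : Type*} [CommRing R] [IsReduced R]
    (x : R) (h : x * (x + 1) * (x + 2) * (x + 3) = -1) : IsSquare (5 : R) := by
  have hsq : (x ^ 2 + 3 * x + 1) ^ 2 = 0 := by linear_combination h
  have hroot : x ^ 2 + 3 * x + 1 = 0 := (pow_eq_zero_iff two_ne_zero).mp hsq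
  exact ⟨2 * x + 3, by linear_combination -4 * hroot⟩

theorem ZMod.not_isSquare_five_of_mod_five {p : ℕ} [Fact p.Prime] (hp2 : p ≠ 2)
    (h5 : p % 5 = 2 ∨ p % 5 = 3) : ¬ IsSquare (5 : ZMod p) := by
  have : Fact (Nat.Prime 5) := ⟨by norm_num⟩
  rw [← Nat.cast_ofNat, ← ZMod.exists_sq_eq_prime_iff_of_mod_four_eq_one (by norm_num) hp2,
    ← ZMod.natCast_mod]
  have h23 : ∀ r : ZMod 5, r = 2 ∨ r = 3 → ¬ IsSquare r := by decide +revert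
  exact h23 _ (by rcases h5 with h | h <;> simp [h])

theorem Nat.factorial_add_four (n : ℕ) :
    (n + 4).factorial = (n + 1) * (n + 2) * (n + 3) * (n + 4) * n.factorial := by
  simp only [Nat.factorial_succ]
  ring

theorem stmt8 (p : ℕ) (hp : p.Prime) (h5 : p % 5 = 2 ∨ p % 5 = 3) :
    ¬ ∃ b c : ℕ, 0 < b ∧ 0 < c ∧ c = b + 4 ∧
      (p - 1).factorial * b.factorial = c.factorial := by
  rintro ⟨b, c, -, -, rfl, h⟩
  have hprod : (p - 1).factorial = (b + 1) * (b + 2) * (b + 3) * (b + 4) := by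
    apply Nat.eq_of_mul_eq_mul_right b.factorial_pos
    rw [h, Nat.factorial_add_four]
  have hp2 : p ≠ 2 := by
    rintro rfl
    have : 1 * 2 * 3 * 4 ≤ (b + 1) * (b + 2) * (b + 3) * (b + 4) := by gcongr <;> omega
    simp only [Nat.reduceSub, Nat.factorial_one] at hprod
    omega
  have := Fact.mk hp
  apply ZMod.not_isSquare_five_of_mod_five hp2 h5
  apply isSquare_five_of_mul_consecutive_eq_neg_one ((b : ZMod p) + 1)
  have hwilson := congrArg (Nat.cast : ℕ → ZMod p) hprod
  rw [ZMod.wilsons_lemma] at hwilson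
  push_cast at hwilson
  linear_combination -hwilson
end

section
/- For all real x in (0, 1), (1 - x)^(-1/x) ≥ e·(1 + x/2). -/
/-!
Truncating the series `-log (1 - x) = ∑ xⁿ⁺¹/(n+1)` after two terms gives
`-log (1 - x) / x ≥ 1 + x/2`, so `(1 - x)^(-1/x) ≥ exp (1 + x/2) = e · exp (x/2) ≥ e · (1 + x/2)`.
-/

open Real

lemma add_sq_div_two_le_neg_log_one_sub {x : ℝ} (h0 : 0 ≤ x) (h1 : x < 1) :
    x + x ^ 2 / 2 ≤ -log (1 - x) := by
  have hsum := hasSum_pow_div_log_of_abs_lt_one (abs_lt.mpr ⟨by linarith, h1⟩)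
  have := sum_le_hasSum (Finset.range 2) (fun n _ => by positivity) hsum
  norm_num [Finset.sum_range_succ] at this
  exact this

theorem stmt17 (x : ℝ) (h0 : 0 < x) (h1 : x < 1) :
    (1 - x) ^ (-1 / x) ≥ Real.exp 1 * (1 + x / 2) := by
  have hlog := add_sq_div_two_le_neg_log_one_sub h0.le h1
  have hexponent : 1 + x / 2 ≤ -1 / x * log (1 - x) := by
    rw [div_mul_eq_mul_div, le_div_iff₀ h0]
    linarith
  rw [rpow_def_of_pos (by linarith), mul_comm]
  calc exp 1 * (1 + x / 2) ≤ exp 1 * exp (x / 2) := by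
        gcongr; linarith [add_one_le_exp (x / 2)]
    _ = exp (1 + x / 2) := (exp_add 1 (x / 2)).symm
    _ ≤ exp (-1 / x * log (1 - x)) := exp_le_exp.mpr hexponent
end

section
/- For every integer k ≥ 2 and real r ≥ k, the k-th root of the falling factorial satisfies 0 ≤ (r - (k-1)/2) - (r(r-1)⋯(r-k+1))^(1/k) ≤ k²/(r - k) (with the convention that the upper bound is +∞ when r = k). -/
private lemma gauss_sum_real (k : ℕ) : (∑ i ∈ Finset.range k, (i : ℝ)) = k * ((k : ℝ) - 1) / 2 := by
  induction k with
  | zero => simp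
  | succ n ih => rw [Finset.sum_range_succ, ih]; push_cast; ring

theorem stmt18 (k : ℕ) (hk : 2 ≤ k) (r : ℝ) (hr : (k : ℝ) ≤ r) :
    0 ≤ (r - ((k : ℝ) - 1) / 2) - (∏ i ∈ Finset.range k, (r - i)) ^ ((1 : ℝ) / k) ∧
    ((k : ℝ) < r →
      (r - ((k : ℝ) - 1) / 2) - (∏ i ∈ Finset.range k, (r - i)) ^ ((1 : ℝ) / k)
        ≤ (k : ℝ) ^ 2 / (r - k)) := by
  have hk1 : (1 : ℝ) ≤ (k : ℝ) := by exact_mod_cast Nat.one_le_of_lt hk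
  have hk2 : (2 : ℝ) ≤ (k : ℝ) := by exact_mod_cast hk
  have hkpos : (0 : ℝ) < k := by linarith
  set P : ℝ := ∏ i ∈ Finset.range k, (r - i) with hP
  have hfac : ∀ i ∈ Finset.range k, (0 : ℝ) < r - i := by
    intro i hi
    have : (i : ℝ) ≤ (k : ℝ) - 1 := by
      have := Finset.mem_range.mp hi
      have : (i : ℝ) + 1 ≤ k := by exact_mod_cast this
      linarith
    linarith
  have hPpos : 0 < P := Finset.prod_pos hfac
  set m : ℝ := r - ((k : ℝ) - 1) / 2 with hm
  set a : ℝ := ((k : ℝ) - 1) / 2 with ha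
  have hapos : 0 < a := by rw [ha]; linarith
  have hma : a < m := by rw [hm, ha]; linarith
  have hsum := gauss_sum_real k
  -- AM-GM upper bound on P^(1/k)
  have hamgm : P ^ ((1 : ℝ) / k) ≤ m := by
    have h := Real.geom_mean_le_arith_mean_weighted (Finset.range k)
      (fun _ => (1 : ℝ) / k) (fun i => r - i)
      (fun i _ => by positivity)
      (by
        rw [Finset.sum_const, Finset.card_range, nsmul_eq_mul]
        field_simp)
      (fun i hi => (hfac i hi).le)
    rw [Real.finset_prod_rpow _ _ (fun i hi => (hfac i hi).le)] at h
    refine h.trans_eq ?_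
    rw [← Finset.mul_sum, Finset.sum_sub_distrib, Finset.sum_const,
      Finset.card_range, nsmul_eq_mul, hsum, hm]
    field_simp
    ring
  constructor
  · linarith
  intro hrk
  -- the pairing identity: P^2 ≥ (m^2 - a^2)^k
  have hB : (0:ℝ) < m ^ 2 - a ^ 2 := by nlinarith
  have hPsq : (m ^ 2 - a ^ 2) ^ k ≤ P ^ 2 := by
    have hrefl : P = ∏ i ∈ Finset.range k, (r - ((k : ℝ) - 1 - i)) := by
      rw [hP, ← Finset.prod_range_reflect]
      apply Finset.prod_congr rfl
      intro i hi
      have hik : i < k := Finset.mem_range.mp hi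
      have h1 : i ≤ k - 1 := Nat.le_sub_one_of_lt hik
      have : ((k - 1 - i : ℕ) : ℝ) = (k : ℝ) - 1 - i := by
        have hk1n : 1 ≤ k := Nat.one_le_of_lt hk
        push_cast [Nat.cast_sub h1, Nat.cast_sub hk1n]
        ring
      rw [this]
    have key : P ^ 2 = ∏ i ∈ Finset.range k, ((r - i) * (r - ((k : ℝ) - 1 - i))) := by
      rw [Finset.prod_mul_distrib, ← hP, ← hrefl, sq]
    rw [key]
    calc (m ^ 2 - a ^ 2) ^ k = ∏ _i ∈ Finset.range k, (m ^ 2 - a ^ 2) := by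
          rw [Finset.prod_const, Finset.card_range]
      _ ≤ _ := by
          apply Finset.prod_le_prod (fun i _ => hB.le)
          intro i hi
          have hik : i < k := Finset.mem_range.mp hi
          have hi' : (i : ℝ) ≤ (k : ℝ) - 1 := by
            have : (i : ℝ) + 1 ≤ k := by exact_mod_cast hik
            linarith
          have hi0 : (0 : ℝ) ≤ i := Nat.cast_nonneg i
          have : (r - i) * (r - ((k : ℝ) - 1 - i)) = m ^ 2 - (a - i) ^ 2 := by
            rw [hm, ha]; ring
          rw [this, ha]
          nlinarith
  -- extract k-th root
  have hroot : Real.sqrt (m ^ 2 - a ^ 2) ≤ P ^ ((1 : ℝ) / k) := by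
    have h1 : ((m ^ 2 - a ^ 2) ^ k) ^ ((1 : ℝ) / (2 * k)) ≤ (P ^ 2) ^ ((1 : ℝ) / (2 * k)) :=
      Real.rpow_le_rpow (by positivity) hPsq (by positivity)
    have hl : ((m ^ 2 - a ^ 2) ^ k) ^ ((1 : ℝ) / (2 * k)) = Real.sqrt (m ^ 2 - a ^ 2) := by
      rw [← Real.rpow_natCast (m ^ 2 - a ^ 2) k, ← Real.rpow_mul hB.le,
        Real.sqrt_eq_rpow]
      congr 1
      field_simp
    have hrr : (P ^ 2) ^ ((1 : ℝ) / (2 * k)) = P ^ ((1 : ℝ) / k) := by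
      rw [← Real.rpow_natCast P 2, ← Real.rpow_mul hPpos.le]
      congr 1
      push_cast
      field_simp
    rw [hl, hrr] at h1
    exact h1
  -- sqrt(m^2-a^2) ≥ m - a^2/m
  have hmpos : 0 < m := hapos.trans hma
  have hsq : m - a ^ 2 / m ≤ Real.sqrt (m ^ 2 - a ^ 2) := by
    have hx : 0 ≤ m - a ^ 2 / m := by
      rw [sub_nonneg, div_le_iff₀ hmpos]
      nlinarith
    rw [Real.le_sqrt hx hB.le]
    have e : m - a ^ 2 / m = (m ^ 2 - a ^ 2) / m := by field_simp
    rw [e, div_pow, div_le_iff₀ (by positivity : (0:ℝ) < m ^ 2)]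
    nlinarith [sq_nonneg a, hB.le]
  -- a^2/m ≤ k^2/(r-k)
  have hfin : a ^ 2 / m ≤ (k : ℝ) ^ 2 / (r - k) := by
    have hrkpos : 0 < r - k := by linarith
    rw [div_le_div_iff₀ hmpos hrkpos, ha, hm]
    nlinarith
  have := hroot.trans' hsq
  linarith
end

section
/- Let k ≥ 2 and let a, c be positive integers with c > k such that c(c-1)⋯(c-k+1) = a!. Then (a!)^(1/k) + (k-1)/2 ≤ c ≤ (a!)^(1/k) + (k-1)/2 + k²/(c-k). -/
set_option maxHeartbeats 1600000 in
theorem stmt19 (k a c : ℕ) (hk : 2 ≤ k) (ha : 0 < a) (hc : k < c)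
    (h : (∏ i ∈ Finset.range k, (c - i)) = a.factorial) :
    ((a.factorial : ℝ)) ^ ((1 : ℝ) / k) + ((k : ℝ) - 1) / 2 ≤ (c : ℝ) ∧
    (c : ℝ) ≤ ((a.factorial : ℝ)) ^ ((1 : ℝ) / k) + ((k : ℝ) - 1) / 2
      + (k : ℝ) ^ 2 / ((c : ℝ) - k) := by
  have hk0 : 0 < k := by omega
  have hK2 : (2:ℝ) ≤ (k:ℝ) := by exact_mod_cast hk
  have hKC : (k:ℝ) < (c:ℝ) := by exact_mod_cast hc
  set K : ℝ := (k:ℝ) with hK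
  set C : ℝ := (c:ℝ) with hC
  set m : ℝ := C - (K-1)/2 with hm
  set D : ℝ := ((K-1)/2)^2 with hD
  have hm_pos : 0 < m := by rw [hm]; linarith
  set P : ℝ := (a.factorial : ℝ) with hPdef
  have hP_pos : 0 < P := by
    rw [hPdef]; exact_mod_cast a.factorial_pos
  have hP : P = ∏ i ∈ Finset.range k, (C - i) := by
    rw [hPdef, ← h, Nat.cast_prod]
    refine Finset.prod_congr rfl fun i hi => ?_
    have hi' : i ≤ c := le_of_lt (lt_trans (Finset.mem_range.mp hi) hc)
    rw [Nat.cast_sub hi']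
  have hcast : ∀ i, i < k → ((k - 1 - i : ℕ) : ℝ) = K - 1 - i := by
    intro i hik
    have h1 : (1:ℕ) + i ≤ k := by omega
    have h2 : k - 1 - i = k - (1 + i) := by omega
    rw [h2, Nat.cast_sub h1]
    push_cast
    ring
  have hP2 : P^2 = ∏ i ∈ Finset.range k, (m^2 - ((K-1)/2 - (i:ℝ))^2) := by
    have h1 : P = ∏ i ∈ Finset.range k, (m + ((K-1)/2 - (i:ℝ))) := by
      rw [hP]; exact Finset.prod_congr rfl fun i _ => by rw [hm]; ring
    have h2 : P = ∏ i ∈ Finset.range k, (m - ((K-1)/2 - (i:ℝ))) := by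
      rw [hP, ← Finset.prod_range_reflect (fun j => C - (j:ℝ)) k]
      refine Finset.prod_congr rfl fun i hi => ?_
      rw [hcast i (Finset.mem_range.mp hi), hm]
      ring
    rw [sq]
    nth_rewrite 1 [h1]
    nth_rewrite 1 [h2]
    rw [← Finset.prod_mul_distrib]
    exact Finset.prod_congr rfl fun i _ => by ring
  have he : ∀ i ∈ Finset.range k, ((K-1)/2 - (i:ℝ))^2 ≤ D := by
    intro i hi
    have h1 : (i:ℝ) ≤ K - 1 := by
      have := Finset.mem_range.mp hi
      have : (i:ℝ) ≤ K - 1 := by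
        rw [hK]
        have : (i:ℝ) + 1 ≤ (k:ℝ) := by exact_mod_cast Finset.mem_range.mp hi
        linarith
      exact this
    have h2 : (0:ℝ) ≤ i := Nat.cast_nonneg i
    rw [hD]
    exact sq_le_sq' (by linarith) (by linarith)
  have hmD_pos : 0 < m^2 - D := by
    have hexp : m^2 - D = C * (C - K + 1) := by rw [hm, hD]; ring
    rw [hexp]
    have hC0 : 0 < C := by linarith
    have : 0 < C - K + 1 := by linarith
    positivity
  clear_value K C m D P
  have hconst1 : (m^2 - D)^k = ∏ _i ∈ Finset.range k, (m^2 - D) := by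
    rw [Finset.prod_const, Finset.card_range]
  have hconst2 : (m^2)^k = ∏ _i ∈ Finset.range k, (m^2) := by
    rw [Finset.prod_const, Finset.card_range]
  have hlb : (m^2 - D)^k ≤ P^2 := by
    rw [hP2, hconst1]
    refine Finset.prod_le_prod (fun i _ => le_of_lt hmD_pos) (fun i hi => ?_)
    linarith [he i hi]
  have hub : P^2 ≤ (m^2)^k := by
    rw [hP2, hconst2]
    refine Finset.prod_le_prod (fun i hi => ?_) (fun i hi => ?_)
    · linarith [he i hi, hmD_pos]
    · nlinarith [sq_nonneg ((K-1)/2 - (i:ℝ))]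
  set Q : ℝ := P ^ ((1:ℝ)/K) with hQdef
  have hQ_pos : 0 < Q := Real.rpow_pos_of_pos hP_pos _
  -- upper bound: Q ≤ m
  have hPm : P ≤ m^k := by
    have h1 : P^2 ≤ (m^k)^2 := by
      calc P^2 ≤ (m^2)^k := hub
      _ = (m^k)^2 := by rw [← pow_mul, ← pow_mul, Nat.mul_comm]
    nlinarith [hP_pos, pow_pos hm_pos k]
  have hQm : Q ≤ m := by
    have h1 : P ^ ((1:ℝ)/K) ≤ (m^k) ^ ((1:ℝ)/K) :=
      Real.rpow_le_rpow hP_pos.le hPm (by positivity)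
    have h2 : (m^k : ℝ) ^ ((1:ℝ)/K) = m := by
      rw [one_div, hK]
      exact Real.pow_rpow_inv_natCast hm_pos.le hk0.ne'
    rw [hQdef]
    linarith
  -- lower bound: m^2 - D ≤ Q^2
  have hQ2 : m^2 - D ≤ Q^2 := by
    have h1 : ((m^2 - D)^k) ^ ((1:ℝ)/K) ≤ (P^2) ^ ((1:ℝ)/K) :=
      Real.rpow_le_rpow (by positivity) hlb (by positivity)
    have h2 : ((m^2 - D)^k : ℝ) ^ ((1:ℝ)/K) = m^2 - D := by
      rw [one_div, hK]
      exact Real.pow_rpow_inv_natCast hmD_pos.le hk0.ne'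
    have h3 : (P^2 : ℝ) ^ ((1:ℝ)/K) = Q^2 := by
      rw [hQdef, ← Real.rpow_natCast P 2, ← Real.rpow_mul hP_pos.le,
        ← Real.rpow_natCast (P ^ ((1:ℝ)/K)) 2, ← Real.rpow_mul hP_pos.le]
      ring_nf
    rw [h2, h3] at h1
    exact h1
  clear_value Q
  clear h hP hP2 he hconst1 hconst2 hlb hub hcast hPm hPdef hQdef hP_pos
  have key : m^2 ≤ Q*m + D := by
    rcases le_or_gt m Q with hmQ | hmQ
    · nlinarith [hD, sq_nonneg ((K-1)/2)]
    · nlinarith [mul_pos (sub_pos.2 hmQ) hQ_pos]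
  have hCK : (0:ℝ) < C - K := by linarith
  have hDK2 : D ≤ K^2 := by rw [hD]; nlinarith
  have hCKm : C - K ≤ m := by rw [hm]; linarith
  have hDm : D / m ≤ K^2 / (C - K) :=
    div_le_div₀ (by positivity) hDK2 hCK hCKm
  have hmQD : m - Q ≤ D / m := by
    rw [le_div_iff₀ hm_pos]
    nlinarith [key]
  constructor
  · have : Q + (K-1)/2 ≤ C := by rw [hm] at hQm; linarith
    exact this
  · have : C ≤ Q + (K-1)/2 + K^2/(C-K) := by
      have : m ≤ Q + K^2/(C-K) := by linarith
      rw [hm] at this; linarith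
    exact this
end
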